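/- arXiv:0704.3371 — 7 statements merged into one kernel-verified Lean document; each statement's English description precedes it below -/
import Mathlib

section
/- For the real line with its usual metric, the generalized roundness is at least 2; that is, for every n ≥ 2 and any points a_1,...,a_n, b_1,...,b_n in ℝ, the inequality ∑_{i<j} (|a_i - a_j|² + |b_i - b_j|²) ≤ ∑_{i,j} |a_i - b_j|² holds. -/
open Finset

private lemma sym_double (n : ℕ) (f : Fin n → ℝ) :
    2 * ∑ p ∈ Finset.univ.filter (fun p : Fin n × Fin n => p.1 < p.2),
        (f p.1 - f p.2) ^ 2
      = ∑ i : Fin n, ∑ j : Fin n, (f i - f j) ^ 2 := by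
  rw [← Finset.sum_product', Finset.univ_product_univ]
  rw [← Finset.sum_filter_add_sum_filter_not (Finset.univ : Finset (Fin n × Fin n))
      (fun p : Fin n × Fin n => p.1 < p.2)]
  have h1 : ∑ p ∈ Finset.univ.filter
      (fun p : Fin n × Fin n => ¬ p.1 < p.2), (f p.1 - f p.2) ^ 2
      = ∑ p ∈ Finset.univ.filter
      (fun p : Fin n × Fin n => p.1 < p.2), (f p.1 - f p.2) ^ 2 := by
    have h2 : ∑ p ∈ Finset.univ.filter
        (fun p : Fin n × Fin n => ¬ p.1 < p.2), (f p.1 - f p.2) ^ 2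
        = ∑ p ∈ Finset.univ.filter
        (fun p : Fin n × Fin n => ¬ p.2 < p.1), (f p.2 - f p.1) ^ 2 := by
      apply Finset.sum_nbij' (fun p => Prod.swap p) (fun p => Prod.swap p) <;>
        simp [Prod.swap]
    rw [h2]
    have h3 : ∑ p ∈ Finset.univ.filter
        (fun p : Fin n × Fin n => ¬ p.2 < p.1), (f p.2 - f p.1) ^ 2
        = ∑ p ∈ Finset.univ.filter
        (fun p : Fin n × Fin n => p.1 < p.2), (f p.2 - f p.1) ^ 2
        + ∑ p ∈ Finset.univ.filter
        (fun p : Fin n × Fin n => p.1 = p.2), (f p.2 - f p.1) ^ 2 := by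
      rw [← Finset.sum_union]
      · apply Finset.sum_congr _ (fun _ _ => rfl)
        ext p
        simp only [Finset.mem_union, Finset.mem_filter, Finset.mem_univ, true_and]
        omega
      · rw [Finset.disjoint_filter]
        intro p _ h h'
        omega
    rw [h3]
    have h4 : ∑ p ∈ Finset.univ.filter
        (fun p : Fin n × Fin n => p.1 = p.2), (f p.2 - f p.1) ^ 2 = 0 := by
      apply Finset.sum_eq_zero
      intro p hp
      simp only [Finset.mem_filter] at hp
      rw [hp.2]
      ring
    rw [h4, add_zero]
    apply Finset.sum_congr rfl
    intro p _
    ring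
  rw [h1]; ring

private lemma double_expand (n : ℕ) (f g : Fin n → ℝ) :
    ∑ i : Fin n, ∑ j : Fin n, (f i - g j) ^ 2
      = (n : ℝ) * ∑ i, (f i) ^ 2 + (n : ℝ) * ∑ i, (g i) ^ 2
        - 2 * (∑ i, f i) * (∑ i, g i) := by
  simp only [sub_sq, Finset.sum_add_distrib, Finset.sum_sub_distrib,
    Finset.sum_const, Finset.card_univ, Fintype.card_fin, nsmul_eq_mul,
    ← Finset.mul_sum, ← Finset.sum_mul]
  ring

/-- The real line has generalized roundness at least 2. -/
theorem real_generalized_roundness_ge_two (n : ℕ) (hn : 2 ≤ n)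
    (a b : Fin n → ℝ) :
    ∑ p ∈ Finset.univ.filter (fun p : Fin n × Fin n => p.1 < p.2),
        (|a p.1 - a p.2| ^ 2 + |b p.1 - b p.2| ^ 2)
      ≤ ∑ i : Fin n, ∑ j : Fin n, |a i - b j| ^ 2 := by
  simp only [sq_abs]
  rw [Finset.sum_add_distrib]
  have ha := sym_double n a
  have hb := sym_double n b
  have hda := double_expand n a a
  have hdb := double_expand n b b
  have hdab := double_expand n a b
  rw [hda] at ha
  rw [hdb] at hb
  rw [hdab]
  nlinarith [sq_nonneg ((∑ i, a i) - (∑ i, b i))]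
end

section
/- In any Hilbert space H, for every n ≥ 2 and any points a_1,...,a_n, b_1,...,b_n in H, the inequality ∑_{1≤i<j≤n} (‖a_i - a_j‖² + ‖b_i - b_j‖²) ≤ ∑_{1≤i,j≤n} ‖a_i - b_j‖² holds. (That is, Hilbert spaces have generalized roundness at least 2.) -/
/-! Expanding every squared norm through the inner product shows that the right-hand side minus
the left-hand side is exactly `‖∑ i, a i - ∑ j, b j‖ ^ 2`, hence nonnegative. -/

open Finset RealInnerProductSpace

theorem Finset.sum_sum_eq_two_nsmul_sum_filter_lt {ι M : Type*} [LinearOrder ι] [Fintype ι]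
    [AddCommMonoid M] (g : ι → ι → M) (hsymm : ∀ i j, g i j = g j i) (hdiag : ∀ i, g i i = 0) :
    ∑ i, ∑ j, g i j = 2 • ∑ p ∈ univ.filter (fun p : ι × ι => p.1 < p.2), g p.1 p.2 := by
  rw [← Fintype.sum_prod_type', ← sum_filter_add_sum_filter_not univ (fun p : ι × ι => p.1 < p.2),
    two_nsmul]
  congr 1
  rw [← sum_filter_add_sum_filter_not _ (fun p : ι × ι => p.1 = p.2),
    sum_eq_zero (fun p hp => by rw [(mem_filter.1 hp).2]; exact hdiag _), zero_add]
  refine sum_equiv (Equiv.prodComm ι ι) (fun p => ?_) (fun p _ => hsymm _ _)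
  simp only [mem_filter, mem_univ, true_and, Equiv.prodComm_apply, Prod.fst_swap, Prod.snd_swap]
  exact ⟨fun h => lt_of_le_of_ne (not_lt.1 h.1) (Ne.symm h.2), fun h => ⟨h.not_gt, h.ne'⟩⟩

section InnerProductSpace

variable {H : Type*} [NormedAddCommGroup H] [InnerProductSpace ℝ H]

theorem sum_sum_norm_sub_sq {ι κ : Type*} [Fintype ι] [Fintype κ] (x : ι → H) (y : κ → H) :
    ∑ i, ∑ j, ‖x i - y j‖ ^ 2
      = Fintype.card κ * ∑ i, ‖x i‖ ^ 2 + Fintype.card ι * ∑ j, ‖y j‖ ^ 2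
        - 2 * ⟪∑ i, x i, ∑ j, y j⟫ := by
  simp_rw [norm_sub_sq_real, sum_add_distrib, sum_sub_distrib, sum_const, card_univ,
    nsmul_eq_mul, ← mul_sum, sum_inner, inner_sum]
  ring

theorem sum_filter_lt_add_norm_sum_sub_sum_sq {ι : Type*} [LinearOrder ι] [Fintype ι]
    (a b : ι → H) :
    ∑ p ∈ univ.filter (fun p : ι × ι => p.1 < p.2), (‖a p.1 - a p.2‖ ^ 2 + ‖b p.1 - b p.2‖ ^ 2)
        + ‖∑ i, a i - ∑ j, b j‖ ^ 2
      = ∑ i, ∑ j, ‖a i - b j‖ ^ 2 := by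
  have hpairs := sum_sum_eq_two_nsmul_sum_filter_lt
    (fun i j => ‖a i - a j‖ ^ 2 + ‖b i - b j‖ ^ 2)
    (fun i j => by rw [norm_sub_rev (a i), norm_sub_rev (b i)]) (fun i => by simp)
  simp only [sum_add_distrib, two_nsmul] at hpairs
  rw [sum_sum_norm_sub_sq a a, sum_sum_norm_sub_sq b b] at hpairs
  rw [sum_add_distrib, sum_sum_norm_sub_sq a b, norm_sub_sq_real]
  have hA := real_inner_self_eq_norm_sq (∑ i, a i)
  have hB := real_inner_self_eq_norm_sq (∑ i, b i)
  linarith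

end InnerProductSpace

theorem hilbert_generalized_roundness_ge_two_general
    {H : Type*} [NormedAddCommGroup H] [InnerProductSpace ℝ H]
    (n : ℕ) (a b : Fin n → H) :
    ∑ p ∈ Finset.univ.filter (fun p : Fin n × Fin n => p.1 < p.2),
        (‖a p.1 - a p.2‖ ^ 2 + ‖b p.1 - b p.2‖ ^ 2)
      ≤ ∑ i : Fin n, ∑ j : Fin n, ‖a i - b j‖ ^ 2 := by
  rw [← sum_filter_lt_add_norm_sum_sub_sum_sq a b]
  exact le_add_of_nonneg_right (sq_nonneg _)

/-- Hilbert spaces have generalized roundness at least 2. -/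
theorem hilbert_generalized_roundness_ge_two
    {H : Type*} [NormedAddCommGroup H] [InnerProductSpace ℝ H] [CompleteSpace H]
    (n : ℕ) (hn : 2 ≤ n) (a b : Fin n → H) :
    ∑ p ∈ Finset.univ.filter (fun p : Fin n × Fin n => p.1 < p.2),
        (‖a p.1 - a p.2‖ ^ 2 + ‖b p.1 - b p.2‖ ^ 2)
      ≤ ∑ i : Fin n, ∑ j : Fin n, ‖a i - b j‖ ^ 2 :=
  hilbert_generalized_roundness_ge_two_general n a b
end

section
/- If (X,d) is a metric space and p > 0 is such that the function (x,y) ↦ d(x,y)^p is a kernel of negative type on X, then for every n ≥ 2 and any points a_1,...,a_n, b_1,...,b_n in X, one has ∑_{1≤i<j≤n} (d(a_i,a_j)^p + d(b_i,b_j)^p) ≤ ∑_{1≤i,j≤n} d(a_i,b_j)^p. -/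
/-- A kernel of negative type on `X`. -/
def IsNegTypeKernel {X : Type*} (ψ : X → X → ℝ) : Prop :=
  (∀ x, ψ x x = 0) ∧ (∀ x y, ψ x y = ψ y x) ∧
    ∀ (n : ℕ) (x : Fin n → X) (lam : Fin n → ℝ), (∑ i, lam i = 0) →
      ∑ i : Fin n, ∑ j : Fin n, lam i * lam j * ψ (x i) (x j) ≤ 0

/-- The generalized roundness inequality for exponent `p` on a metric space `X`. -/
def GRIneq (X : Type*) [MetricSpace X] (p : ℝ) : Prop :=
  ∀ (n : ℕ), 2 ≤ n → ∀ a b : Fin n → X,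
    ∑ q ∈ Finset.univ.filter (fun q : Fin n × Fin n => q.1 < q.2),
        (dist (a q.1) (a q.2) ^ p + dist (b q.1) (b q.2) ^ p)
      ≤ ∑ i : Fin n, ∑ j : Fin n, dist (a i) (b j) ^ p

private lemma double_sum_eq {n : ℕ} (f : Fin n → Fin n → ℝ) (hsym : ∀ i j, f i j = f j i)
    (hd : ∀ i, f i i = 0) :
    ∑ i : Fin n, ∑ j : Fin n, f i j
      = 2 * ∑ q ∈ Finset.univ.filter (fun q : Fin n × Fin n => q.1 < q.2), f q.1 q.2 := by
  classical
  rw [← Finset.sum_product']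
  have h1 : ∑ q ∈ (Finset.univ ×ˢ Finset.univ : Finset (Fin n × Fin n)), f q.1 q.2
      = ∑ q ∈ (Finset.univ ×ˢ Finset.univ).filter (fun q : Fin n × Fin n => q.1 ≠ q.2),
          f q.1 q.2 := by
    rw [eq_comm]
    apply Finset.sum_subset (Finset.filter_subset _ _)
    intro q _ hq
    simp only [Finset.mem_filter, not_and, not_not] at hq
    have : q.1 = q.2 := hq (by simp)
    rw [← this, hd]
  have h2 : (Finset.univ ×ˢ Finset.univ).filter (fun q : Fin n × Fin n => q.1 ≠ q.2)
      = (Finset.univ ×ˢ Finset.univ).filter (fun q : Fin n × Fin n => q.1 < q.2)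
        ∪ (Finset.univ ×ˢ Finset.univ).filter (fun q : Fin n × Fin n => q.2 < q.1) := by
    ext q
    simp only [Finset.mem_filter, Finset.mem_union, Finset.mem_product, Finset.mem_univ,
      true_and, and_true]
    exact ne_iff_lt_or_gt
  have hdisj : Disjoint
      ((Finset.univ ×ˢ Finset.univ).filter (fun q : Fin n × Fin n => q.1 < q.2))
      ((Finset.univ ×ˢ Finset.univ).filter (fun q : Fin n × Fin n => q.2 < q.1)) := by
    rw [Finset.disjoint_left]
    intro q hq1 hq2
    simp only [Finset.mem_filter] at hq1 hq2
    exact absurd hq2.2 (not_lt_of_gt hq1.2)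
  have h3 : ∑ q ∈ (Finset.univ ×ˢ Finset.univ).filter (fun q : Fin n × Fin n => q.2 < q.1),
      f q.1 q.2
      = ∑ q ∈ (Finset.univ ×ˢ Finset.univ).filter (fun q : Fin n × Fin n => q.1 < q.2),
          f q.1 q.2 := by
    apply Finset.sum_nbij' (fun q => Prod.swap q) (fun q => Prod.swap q) <;>
      simp [hsym _ _]
  rw [h1, h2, Finset.sum_union hdisj, h3, Finset.univ_product_univ]
  ring

/-- If d^p is of negative type then the generalized roundness inequality holds for p. -/
theorem negType_imp_gr {X : Type*} [MetricSpace X] (p : ℝ) (hp : 0 < p)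
    (h : IsNegTypeKernel (fun x y : X => dist x y ^ p)) : GRIneq X p := by
  obtain ⟨h0, hsym, hneg⟩ := h
  intro n hn a b
  set ψ : X → X → ℝ := fun x y => dist x y ^ p with hψ
  set x : Fin (n + n) → X := Fin.addCases a b with hx
  set lam : Fin (n + n) → ℝ := Fin.addCases (fun _ => (1 : ℝ)) (fun _ => (-1 : ℝ)) with hlam
  have hsumlam : ∑ i, lam i = 0 := by
    rw [Fin.sum_univ_add]
    simp only [hlam, ← Fin.natAdd_eq_addNat, Fin.addCases_left, Fin.addCases_right]
    simp
  have key := hneg (n + n) x lam hsumlam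
  rw [Fin.sum_univ_add] at key
  simp only [Fin.sum_univ_add, hx, hlam, ← Fin.natAdd_eq_addNat, Fin.addCases_left, Fin.addCases_right,
    one_mul, mul_one, neg_mul, mul_neg, neg_neg, Finset.sum_add_distrib,
    Finset.sum_neg_distrib] at key
  -- key : ∑∑ ψ(a,a) - ∑∑ψ(a,b) + (-∑∑ψ(b,a) + ∑∑ψ(b,b)) ≤ 0 (modulo shape)
  have hba : ∑ i : Fin n, ∑ j : Fin n, ψ (b i) (a j)
      = ∑ i : Fin n, ∑ j : Fin n, ψ (a i) (b j) := by
    rw [Finset.sum_comm]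
    exact Finset.sum_congr rfl fun i _ => Finset.sum_congr rfl fun j _ => hsym _ _
  have haa := double_sum_eq (fun i j => ψ (a i) (a j)) (fun i j => hsym _ _) (fun i => h0 _)
  have hbb := double_sum_eq (fun i j => ψ (b i) (b j)) (fun i j => hsym _ _) (fun i => h0 _)
  have hgoal : ∑ q ∈ Finset.univ.filter (fun q : Fin n × Fin n => q.1 < q.2),
      (dist (a q.1) (a q.2) ^ p + dist (b q.1) (b q.2) ^ p)
      = ∑ q ∈ Finset.univ.filter (fun q : Fin n × Fin n => q.1 < q.2), ψ (a q.1) (a q.2)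
        + ∑ q ∈ Finset.univ.filter (fun q : Fin n × Fin n => q.1 < q.2), ψ (b q.1) (b q.2) := by
    rw [← Finset.sum_add_distrib]
  rw [hgoal]
  simp only [hψ] at haa hbb hba key ⊢
  linarith [key, haa, hbb, hba]
end

section
/- Conversely, if (X,d) is a metric space and p > 0 is such that the generalized roundness inequality with exponent p holds for all n ≥ 2 and all choices of 2n points, then d^p is a kernel of negative type on X. -/
/-!
Take points `x i` with multiplicities `m i` on one side and `n i` on the other, where
`∑ m = ∑ n`. Since `d^p` is symmetric and vanishes on the diagonal, the roundness inequality for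
these two families, written with full double sums, is exactly
`∑ i j, (m i - n i) (m j - n j) d(x i, x j)^p ≤ 0`: the negative-type inequality for integer
weights summing to zero. Real weights `λ` are limits of `z / T` with `z` integral and `∑ z = 0`:
take `z i = ⌊T s (i+1)⌋ - ⌊T s i⌋` for the partial sums `s` of `λ`, so that `∑ z` telescopes
to `0`.
-/

open Finset Filter Topology

theorem sum_sum_eq_two_nsmul_sum_lt {ι M : Type*} [Fintype ι] [LinearOrder ι] [AddCommMonoid M]
    (f : ι → ι → M) (hsymm : ∀ i j, f i j = f j i) (hdiag : ∀ i, f i i = 0) :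
    ∑ i, ∑ j, f i j = 2 • ∑ q ∈ univ.filter (fun q : ι × ι => q.1 < q.2), f q.1 q.2 := by
  have hsplit : ∀ i j, f i j = (if i < j then f i j else 0) + if j < i then f j i else 0 := by
    intro i j
    rcases lt_trichotomy i j with h | rfl | h
    · simp [h, h.not_gt]
    · simp [hdiag]
    · simp [h, h.not_gt, hsymm i j]
  calc ∑ i, ∑ j, f i j
      = ∑ i, ∑ j, (if i < j then f i j else 0) + ∑ i, ∑ j, if j < i then f j i else 0 := by
        simp only [← sum_add_distrib, ← hsplit]
    _ = _ := by
        rw [sum_comm (f := fun i j => if j < i then f j i else 0), two_nsmul, sum_filter,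
          ← Fintype.sum_prod_type']

theorem Fintype.sum_sum_equiv {α β γ δ M : Type*} [Fintype α] [Fintype β] [Fintype γ] [Fintype δ]
    [AddCommMonoid M] (e : α ≃ γ) (e' : β ≃ δ) (f : γ → δ → M) :
    ∑ i, ∑ j, f (e i) (e' j) = ∑ i, ∑ j, f i j :=
  Fintype.sum_equiv e _ _ fun _ ↦ Fintype.sum_equiv e' _ _ fun _ ↦ rfl

theorem sum_sigma_fin_sum_sigma_fin {ι R : Type*} [Fintype ι] [CommSemiring R] (m n : ι → ℕ)
    (f : ι → ι → R) :
    ∑ s : Σ i, Fin (m i), ∑ t : Σ j, Fin (n j), f s.1 t.1 = ∑ i, ∑ j, (m i : R) * n j * f i j := by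
  simp only [Fintype.sum_sigma, sum_const, card_univ, Fintype.card_fin, nsmul_eq_mul, mul_sum]
  exact sum_congr rfl fun i _ ↦ sum_congr rfl fun j _ ↦ by ring

theorem sum_sum_sub_mul_sub {ι R : Type*} [Fintype ι] [CommRing R] (ψ : ι → ι → R)
    (hψ : ∀ i j, ψ i j = ψ j i) (a b : ι → R) :
    ∑ i, ∑ j, (a i - b i) * (a j - b j) * ψ i j
      = ∑ i, ∑ j, a i * a j * ψ i j + ∑ i, ∑ j, b i * b j * ψ i j
        - 2 * ∑ i, ∑ j, a i * b j * ψ i j := by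
  have hswap : ∑ i, ∑ j, b i * a j * ψ i j = ∑ i, ∑ j, a i * b j * ψ i j := by
    rw [sum_comm]
    exact sum_congr rfl fun i _ ↦ sum_congr rfl fun j _ ↦ by rw [hψ]; ring
  simp only [sub_mul, mul_sub, sum_sub_distrib, hswap]
  ring

theorem Fin.partialSum_last {n : ℕ} {M : Type*} [AddCommMonoid M] (f : Fin n → M) :
    Fin.partialSum f (Fin.last n) = ∑ i, f i := by
  simp [Fin.partialSum, List.take_of_length_le, List.sum_ofFn]

theorem Fin.sum_univ_succ_sub_castSucc {n : ℕ} {M : Type*} [AddCommGroup M] (g : Fin (n + 1) → M) :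
    ∑ i : Fin n, (g i.succ - g i.castSucc) = g (Fin.last n) - g 0 := by
  rw [sum_sub_distrib, eq_sub_of_add_eq' (Fin.sum_univ_succ g).symm,
    eq_sub_of_add_eq (Fin.sum_univ_castSucc g).symm]
  abel

theorem tendsto_int_floor_mul_div_atTop {R : Type*} [TopologicalSpace R] [Field R] [LinearOrder R]
    [IsStrictOrderedRing R] [OrderTopology R] [FloorRing R] (a : R) :
    Tendsto (fun x ↦ (⌊a * x⌋ : R) / x) atTop (𝓝 a) := by
  have A : Tendsto (fun x : R ↦ a - x⁻¹) atTop (𝓝 a) := by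
    simpa using (tendsto_const_nhds (x := a)).sub tendsto_inv_atTop_zero
  refine tendsto_of_tendsto_of_tendsto_of_le_of_le' A tendsto_const_nhds ?_ ?_
  · filter_upwards [eventually_gt_atTop 0] with x hx
    rw [le_div_iff₀ hx, sub_mul, inv_mul_cancel₀ hx.ne']
    linarith [Int.sub_one_lt_floor (a * x)]
  · filter_upwards [eventually_gt_atTop 0] with x hx
    rw [div_le_iff₀ hx]
    exact Int.floor_le _

theorem exists_int_approx_of_sum_eq_zero {n : ℕ} (lam : Fin n → ℝ) (hsum : ∑ i, lam i = 0) :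
    ∃ z : ℝ → Fin n → ℤ, (∀ T, ∑ i, z T i = 0) ∧
      ∀ i, Tendsto (fun T ↦ (z T i : ℝ) / T) atTop (𝓝 (lam i)) := by
  refine ⟨fun T i ↦ ⌊Fin.partialSum lam i.succ * T⌋ - ⌊Fin.partialSum lam i.castSucc * T⌋,
    fun T ↦ ?_, fun i ↦ ?_⟩
  · rw [Fin.sum_univ_succ_sub_castSucc (fun k ↦ ⌊Fin.partialSum lam k * T⌋), Fin.partialSum_last,
      hsum, Fin.partialSum_zero, sub_self]
  · have h := (tendsto_int_floor_mul_div_atTop (Fin.partialSum lam i.succ)).sub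
      (tendsto_int_floor_mul_div_atTop (Fin.partialSum lam i.castSucc))
    have hstep : Fin.partialSum lam i.succ - Fin.partialSum lam i.castSucc = lam i := by
      rw [Fin.partialSum_succ, add_sub_cancel_left]
    rw [hstep] at h
    simpa only [Int.cast_sub, sub_div] using h

theorem sum_sum_mul_nonpos_of_int {n : ℕ} (ψ : Fin n → Fin n → ℝ)
    (hint : ∀ z : Fin n → ℤ, ∑ i, z i = 0 → ∑ i, ∑ j, (z i : ℝ) * z j * ψ i j ≤ 0)
    (lam : Fin n → ℝ) (hsum : ∑ i, lam i = 0) :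
    ∑ i, ∑ j, lam i * lam j * ψ i j ≤ 0 := by
  obtain ⟨z, hz, hlim⟩ := exists_int_approx_of_sum_eq_zero lam hsum
  have hscaled : ∀ T : ℝ, ∑ i, ∑ j, (z T i : ℝ) / T * ((z T j : ℝ) / T) * ψ i j ≤ 0 := by
    intro T
    have hhom : ∑ i, ∑ j, (z T i : ℝ) / T * ((z T j : ℝ) / T) * ψ i j
        = (T⁻¹) ^ 2 * ∑ i, ∑ j, (z T i : ℝ) * z T j * ψ i j := by
      simp only [mul_sum]
      exact sum_congr rfl fun i _ ↦ sum_congr rfl fun j _ ↦ by ring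
    rw [hhom]
    exact mul_nonpos_of_nonneg_of_nonpos (sq_nonneg _) (hint (z T) (hz T))
  have hconv : Tendsto (fun T : ℝ ↦ ∑ i, ∑ j, (z T i : ℝ) / T * ((z T j : ℝ) / T) * ψ i j)
      atTop (𝓝 (∑ i, ∑ j, lam i * lam j * ψ i j)) :=
    tendsto_finsetSum _ fun i _ ↦ tendsto_finsetSum _ fun j _ ↦
      ((hlim i).mul (hlim j)).mul tendsto_const_nhds
  exact le_of_tendsto' hconv hscaled

namespace GRIneq

variable {X : Type*} [MetricSpace X] {p : ℝ}

theorem sum_sum_le_fin (h : GRIneq X p) (hp : 0 < p) {N : ℕ} (a b : Fin N → X) :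
    ∑ i, ∑ j, dist (a i) (a j) ^ p + ∑ i, ∑ j, dist (b i) (b j) ^ p
      ≤ 2 * ∑ i, ∑ j, dist (a i) (b j) ^ p := by
  have hdiag : ∀ x : X, dist x x ^ p = 0 := fun x ↦ by rw [dist_self, Real.zero_rpow hp.ne']
  rcases le_or_gt 2 N with hN | hN
  · have hpairs : ∀ c : Fin N → X, ∑ i, ∑ j, dist (c i) (c j) ^ p
        = 2 * ∑ q ∈ univ.filter (fun q : Fin N × Fin N => q.1 < q.2), dist (c q.1) (c q.2) ^ p :=
      fun c ↦ by
        rw [sum_sum_eq_two_nsmul_sum_lt _ (fun i j ↦ by rw [dist_comm]) (fun i ↦ hdiag _),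
          nsmul_eq_mul, Nat.cast_ofNat]
    have hgr := h N hN a b
    rw [sum_add_distrib] at hgr
    rw [hpairs, hpairs]
    linarith
  · have : Subsingleton (Fin N) := Fin.subsingleton_iff_le_one.mpr (by omega)
    have hzero : ∀ c : Fin N → X, ∑ i, ∑ j, dist (c i) (c j) ^ p = 0 := fun c ↦
      sum_eq_zero fun i _ ↦ sum_eq_zero fun j _ ↦ by rw [Subsingleton.elim j i, hdiag]
    rw [hzero, hzero, zero_add]
    positivity

theorem sum_sum_le (h : GRIneq X p) (hp : 0 < p) {ι κ : Type*} [Fintype ι] [Fintype κ]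
    (hcard : Fintype.card ι = Fintype.card κ) (a : ι → X) (b : κ → X) :
    ∑ i, ∑ j, dist (a i) (a j) ^ p + ∑ i, ∑ j, dist (b i) (b j) ^ p
      ≤ 2 * ∑ i, ∑ j, dist (a i) (b j) ^ p := by
  let e := Fintype.equivFin ι
  let e' := (Fintype.equivFin κ).trans (finCongr hcard.symm)
  have key := h.sum_sum_le_fin hp (a ∘ e.symm) (b ∘ e'.symm)
  simp only [Function.comp_apply] at key
  rwa [Fintype.sum_sum_equiv e.symm e.symm (fun i j ↦ dist (a i) (a j) ^ p),
    Fintype.sum_sum_equiv e'.symm e'.symm (fun i j ↦ dist (b i) (b j) ^ p),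
    Fintype.sum_sum_equiv e.symm e'.symm (fun i j ↦ dist (a i) (b j) ^ p)] at key

theorem sum_sum_nat_weights_nonpos (h : GRIneq X p) (hp : 0 < p) {ι : Type*} [Fintype ι]
    (x : ι → X) (m n : ι → ℕ) (hmn : ∑ i, m i = ∑ i, n i) :
    ∑ i, ∑ j, ((m i : ℝ) - n i) * ((m j : ℝ) - n j) * dist (x i) (x j) ^ p ≤ 0 := by
  have hcard : Fintype.card (Σ i, Fin (m i)) = Fintype.card (Σ i, Fin (n i)) := by
    simp [hmn]
  have key := h.sum_sum_le hp hcard (fun s ↦ x s.1) (fun s ↦ x s.1)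
  rw [sum_sigma_fin_sum_sigma_fin m m (fun i j ↦ dist (x i) (x j) ^ p),
    sum_sigma_fin_sum_sigma_fin n n (fun i j ↦ dist (x i) (x j) ^ p),
    sum_sigma_fin_sum_sigma_fin m n (fun i j ↦ dist (x i) (x j) ^ p)] at key
  rw [sum_sum_sub_mul_sub _ (fun i j ↦ by rw [dist_comm])]
  linarith

theorem sum_sum_int_weights_nonpos (h : GRIneq X p) (hp : 0 < p) {ι : Type*} [Fintype ι]
    (x : ι → X) (z : ι → ℤ) (hz : ∑ i, z i = 0) :
    ∑ i, ∑ j, (z i : ℝ) * z j * dist (x i) (x j) ^ p ≤ 0 := by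
  have hmn : ∑ i, (z i).toNat = ∑ i, (-z i).toNat := by
    have : ∑ i, ((z i).toNat : ℤ) - ∑ i, ((-z i).toNat : ℤ) = 0 := by
      rw [← sum_sub_distrib]
      simpa only [Int.toNat_sub_toNat_neg] using hz
    exact_mod_cast sub_eq_zero.mp this
  have hsplit : ∀ i, (z i : ℝ) = ((z i).toNat : ℝ) - ((-z i).toNat : ℝ) := fun i ↦ by
    exact_mod_cast (Int.toNat_sub_toNat_neg (z i)).symm
  simpa only [← hsplit] using
    h.sum_sum_nat_weights_nonpos hp x (fun i ↦ (z i).toNat) (fun i ↦ (-z i).toNat) hmn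

end GRIneq

/-- If the generalized roundness inequality holds for p then d^p is of negative type. -/
theorem gr_imp_negType {X : Type*} [MetricSpace X] (p : ℝ) (hp : 0 < p)
    (h : GRIneq X p) : IsNegTypeKernel (fun x y : X => dist x y ^ p) := by
  refine ⟨fun x ↦ by simp [Real.zero_rpow hp.ne'], fun x y ↦ congrArg (· ^ p) (dist_comm x y), ?_⟩
  intro n x lam hsum
  exact sum_sum_mul_nonpos_of_int (fun i j ↦ dist (x i) (x j) ^ p)
    (fun z hz ↦ h.sum_sum_int_weights_nonpos hp x z hz) lam hsum
end

section
/- For n ≥ 2, the generalized roundness of ℤⁿ with the word metric associated to its canonical basis is at most 1: for every p > 1 there exist m ≥ 2 and points a_1,...,a_m, b_1,...,b_m in ℤⁿ violating the inequality ∑_{i<j} (d(a_i,a_j)^p + d(b_i,b_j)^p) ≤ ∑_{i,j} d(a_i,b_j)^p. -/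
/-! Take the unit square in a coordinate plane of ℤⁿ, with `a` one diagonal and `b` the other.
In the ℓ¹ metric both diagonals have length 2 and all four sides length 1, so the quadrilateral
inequality reads `2 ^ p + 2 ^ p ≤ 4`, which fails for `p > 1`. -/

open Finset

lemma sum_abs_sub_single_add_single {ι : Type*} [Fintype ι] [DecidableEq ι] {i j : ι}
    (hij : i ≠ j) (s t s' t' : ℤ) :
    ∑ k, |((Pi.single i s + Pi.single j t : ι → ℤ) k : ℝ)
        - (Pi.single i s' + Pi.single j t' : ι → ℤ) k| = |(s : ℝ) - s'| + |(t : ℝ) - t'| := by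
  rw [Fintype.sum_eq_add i j hij fun k hk => by simp [hk.1, hk.2]]
  simp [hij, hij.symm]

lemma sum_filter_fst_lt_snd_fin_two {M : Type*} [AddCommMonoid M] (f : Fin 2 × Fin 2 → M) :
    ∑ q ∈ univ.filter (fun q : Fin 2 × Fin 2 => q.1 < q.2), f q = f (0, 1) := by
  rw [show univ.filter (fun q : Fin 2 × Fin 2 => q.1 < q.2) = {(0, 1)} by decide, sum_singleton]

/-- For n ≥ 2, the generalized roundness of ℤⁿ with the ℓ¹ word metric is at most 1:
for every p > 1 some 2m-gon inequality fails. -/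
theorem zn_gr_le_one (n : ℕ) (hn : 2 ≤ n) (d : (Fin n → ℤ) → (Fin n → ℤ) → ℝ)
    (hd : ∀ x y : Fin n → ℤ, d x y = ∑ k, |(x k : ℝ) - y k|)
    (p : ℝ) (hp : 1 < p) :
    ∃ (m : ℕ), 2 ≤ m ∧ ∃ a b : Fin m → (Fin n → ℤ),
      ¬ (∑ q ∈ Finset.univ.filter (fun q : Fin m × Fin m => q.1 < q.2),
            (d (a q.1) (a q.2) ^ p + d (b q.1) (b q.2) ^ p)
          ≤ ∑ i : Fin m, ∑ j : Fin m, d (a i) (b j) ^ p) := by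
  let i : Fin n := ⟨0, by omega⟩
  let j : Fin n := ⟨1, by omega⟩
  have hij : i ≠ j := by simp [i, j, Fin.ext_iff]
  let v (s t : ℤ) : Fin n → ℤ := Pi.single i s + Pi.single j t
  have hdv (s t s' t' : ℤ) : d (v s t) (v s' t') = |(s : ℝ) - s'| + |(t : ℝ) - t'| :=
    (hd _ _).trans (sum_abs_sub_single_add_single hij s t s' t')
  refine ⟨2, le_rfl, ![v 0 0, v 1 1], ![v 1 0, v 0 1], ?_⟩
  have h2p : (2 : ℝ) < 2 ^ p := by
    simpa using Real.rpow_lt_rpow_of_exponent_lt one_lt_two hp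
  rw [sum_filter_fst_lt_snd_fin_two]
  norm_num [Fin.sum_univ_two, hdv]
  linarith
end

section
/- If ψ is a kernel of negative type on X and 0 < α ≤ 1, then ψ^α is also a kernel of negative type. Consequently, if (X,d) is a metric space such that d^q is of negative type and 0 < p ≤ q, then d^p is of negative type. -/
open MeasureTheory Set Finset

/-! ### Auxiliary lemmas for Schoenberg's theorem -/

section PosQF

/-- Positive semidefinite quadratic form on a finite kernel. -/
def PosQF {n : ℕ} (M : Fin n → Fin n → ℝ) : Prop :=
  ∀ v : Fin n → ℝ, 0 ≤ ∑ i, ∑ j, v i * v j * M i j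

lemma triple_swap {n : ℕ} (f : Fin n → Fin n → Fin n → ℝ) :
    ∑ i, ∑ j, ∑ k, f i j k = ∑ k, ∑ i, ∑ j, f i j k := by
  have h1 : ∀ i, ∑ j, ∑ k, f i j k = ∑ k, ∑ j, f i j k := fun i => by rw [Finset.sum_comm]
  simp_rw [h1]
  rw [Finset.sum_comm]

open scoped MatrixOrder

lemma PosQF.decomp {n : ℕ} {M : Fin n → Fin n → ℝ} (hM : PosQF M)
    (hsym : ∀ i j, M i j = M j i) : ∃ C : Fin n → Fin n → ℝ, ∀ i j, M i j = ∑ k, C k i * C k j := by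
  have hps : Matrix.PosSemidef (Matrix.of M) := by
    rw [Matrix.posSemidef_iff_dotProduct_mulVec]
    constructor
    · ext i j
      simp [Matrix.conjTranspose, hsym i j]
    · intro x
      have := hM x
      simpa [dotProduct, Matrix.mulVec, Finset.mul_sum, mul_comm, mul_assoc,
        mul_left_comm] using this
  obtain ⟨B, hB⟩ : ∃ B : Matrix (Fin n) (Fin n) ℝ, Matrix.of M = B.conjTranspose * B :=
    ⟨CFC.sqrt (Matrix.of M), by
      rw [(Matrix.nonneg_iff_posSemidef.mp (CFC.sqrt_nonneg (Matrix.of M))).isHermitian.eq,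
        CFC.sqrt_mul_sqrt_self _ hps.nonneg]⟩
  refine ⟨fun k i => B k i, fun i j => ?_⟩
  have := congrFun (congrFun hB i) j
  simpa [Matrix.mul_apply, Matrix.conjTranspose_apply] using this

lemma PosQF.mul {n : ℕ} {A B : Fin n → Fin n → ℝ} (hA : PosQF A)
    (hsym : ∀ i j, A i j = A j i) (hB : PosQF B) :
    PosQF (fun i j => A i j * B i j) := by
  obtain ⟨C, hC⟩ := hA.decomp hsym
  intro v
  have key : ∑ i, ∑ j, v i * v j * (A i j * B i j)
      = ∑ k, ∑ i, ∑ j, (v i * C k i) * (v j * C k j) * B i j := by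
    rw [← triple_swap]
    refine Finset.sum_congr rfl fun i _ => Finset.sum_congr rfl fun j _ => ?_
    rw [hC, Finset.sum_mul, Finset.mul_sum]
    exact Finset.sum_congr rfl fun k _ => by ring
  rw [key]
  exact Finset.sum_nonneg fun k _ => hB _

lemma posQF_one {n : ℕ} : PosQF (fun _ _ : Fin n => (1:ℝ)) := by
  intro v
  have h : ∑ i, ∑ j, v i * v j * 1 = (∑ i, v i) ^ 2 := by
    rw [sq, Finset.sum_mul_sum]
    exact Finset.sum_congr rfl fun i _ => Finset.sum_congr rfl fun j _ => by ring
  rw [h]; exact sq_nonneg _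

lemma PosQF.pow {n : ℕ} {A : Fin n → Fin n → ℝ} (hA : PosQF A)
    (hsym : ∀ i j, A i j = A j i) (k : ℕ) :
    PosQF (fun i j => A i j ^ k) := by
  induction k with
  | zero => simpa using posQF_one
  | succ k ih =>
      intro v
      have h := (hA.mul hsym ih) v
      calc (0:ℝ) ≤ ∑ i, ∑ j, v i * v j * (A i j * A i j ^ k) := h
        _ = ∑ i, ∑ j, v i * v j * A i j ^ (k+1) :=
            Finset.sum_congr rfl fun i _ => Finset.sum_congr rfl fun j _ => by ring

lemma PosQF.exp {n : ℕ} {A : Fin n → Fin n → ℝ} (hA : PosQF A)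
    (hsym : ∀ i j, A i j = A j i) :
    PosQF (fun i j => Real.exp (A i j)) := by
  intro v
  have hsumm : ∀ i j : Fin n, Summable (fun k : ℕ => v i * v j * (A i j ^ k / (k.factorial : ℝ))) :=
    fun i j => (Real.summable_pow_div_factorial (A i j)).mul_left _
  have hexp : ∀ i j, v i * v j * Real.exp (A i j)
      = ∑' k : ℕ, v i * v j * (A i j ^ k / (k.factorial : ℝ)) := by
    intro i j
    rw [Real.exp_eq_exp_ℝ, NormedSpace.exp_eq_tsum_div, ← tsum_mul_left]
  calc (0:ℝ) ≤ ∑' k : ℕ, ∑ i, ∑ j, v i * v j * (A i j ^ k / (k.factorial : ℝ)) := by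
        refine tsum_nonneg fun k => ?_
        have h := (hA.pow hsym k) v
        have heq : ∑ i, ∑ j, v i * v j * (A i j ^ k / (k.factorial : ℝ))
            = (∑ i, ∑ j, v i * v j * A i j ^ k) / (k.factorial : ℝ) := by
          rw [Finset.sum_div]
          exact Finset.sum_congr rfl fun i _ => by
            rw [Finset.sum_div]
            exact Finset.sum_congr rfl fun j _ => by ring
        rw [heq]
        positivity
    _ = ∑ i, ∑ j, ∑' k : ℕ, v i * v j * (A i j ^ k / (k.factorial : ℝ)) := by
        rw [Summable.tsum_finsetSum fun i _ => summable_sum fun j _ => hsumm i j]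
        exact Finset.sum_congr rfl fun i _ => Summable.tsum_finsetSum fun j _ => hsumm i j
    _ = ∑ i, ∑ j, v i * v j * Real.exp (A i j) :=
        Finset.sum_congr rfl fun i _ => Finset.sum_congr rfl fun j _ => (hexp i j).symm

end PosQF

section NegType

lemma IsNegTypeKernel.nonneg {X : Type*} {ψ : X → X → ℝ} (h : IsNegTypeKernel ψ) (x y : X) :
    0 ≤ ψ x y := by
  obtain ⟨hdiag, hsym, hneg⟩ := h
  have := hneg 2 ![x, y] ![1, -1] (by simp [Fin.sum_univ_two])
  simp [Fin.sum_univ_two, hdiag, hsym y x] at this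
  linarith

lemma IsNegTypeKernel.posQF_phi {X : Type*} {ψ : X → X → ℝ} (h : IsNegTypeKernel ψ)
    {n : ℕ} (x : Fin n → X) (x₀ : X) :
    PosQF (fun i j => ψ (x i) x₀ + ψ (x j) x₀ - ψ (x i) (x j)) := by
  obtain ⟨hdiag, hsym, hneg⟩ := h
  intro v
  set s : ℝ := ∑ i, v i with hs
  have key := hneg (n+1) (Fin.cons x₀ x) (Fin.cons (-s) v) (by
    simp only [Fin.sum_univ_succ, Fin.cons_zero, Fin.cons_succ, hs]; ring)
  have keyeq : ∑ i : Fin (n+1), ∑ j : Fin (n+1),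
      (Fin.cons (-s) v : Fin (n+1) → ℝ) i * (Fin.cons (-s) v : Fin (n+1) → ℝ) j *
        ψ ((Fin.cons x₀ x : Fin (n+1) → X) i) ((Fin.cons x₀ x : Fin (n+1) → X) j)
      = (-s) * ∑ j, v j * ψ (x j) x₀ + (-s) * ∑ i, v i * ψ (x i) x₀
        + ∑ i, ∑ j, v i * v j * ψ (x i) (x j) := by
    simp only [Fin.sum_univ_succ, Fin.cons_zero, Fin.cons_succ, hdiag x₀]
    rw [Finset.sum_add_distrib]
    have e1 : ∑ j, -s * v j * ψ x₀ (x j) = (-s) * ∑ j, v j * ψ (x j) x₀ := by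
      rw [Finset.mul_sum]
      exact Finset.sum_congr rfl fun j _ => by rw [hsym x₀ (x j)]; ring
    have e2 : ∑ i, v i * -s * ψ (x i) x₀ = (-s) * ∑ i, v i * ψ (x i) x₀ := by
      rw [Finset.mul_sum]
      exact Finset.sum_congr rfl fun i _ => by ring
    rw [e1, e2]
    ring
  rw [keyeq] at key
  have target : ∑ i, ∑ j, v i * v j * (ψ (x i) x₀ + ψ (x j) x₀ - ψ (x i) (x j))
      = s * ∑ i, v i * ψ (x i) x₀ + s * ∑ j, v j * ψ (x j) x₀
        - ∑ i, ∑ j, v i * v j * ψ (x i) (x j) := by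
    have expand : ∀ i, ∑ j, v i * v j * (ψ (x i) x₀ + ψ (x j) x₀ - ψ (x i) (x j))
        = (v i * ψ (x i) x₀) * s + v i * ∑ j, v j * ψ (x j) x₀
          - ∑ j, v i * v j * ψ (x i) (x j) := by
      intro i
      have e3 : ∀ j, v i * v j * (ψ (x i) x₀ + ψ (x j) x₀ - ψ (x i) (x j))
          = (v i * ψ (x i) x₀) * v j + v i * (v j * ψ (x j) x₀) - v i * v j * ψ (x i) (x j) :=
        fun j => by ring
      simp only [e3]
      rw [Finset.sum_sub_distrib, Finset.sum_add_distrib, ← Finset.mul_sum, ← Finset.mul_sum, hs]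
    simp only [expand]
    rw [Finset.sum_sub_distrib, Finset.sum_add_distrib, ← Finset.sum_mul, ← Finset.sum_mul, ← hs]
    ring
  rw [target]
  linarith

lemma IsNegTypeKernel.exp_posQF {X : Type} {ψ : X → X → ℝ} (h : IsNegTypeKernel ψ) {t : ℝ}
    (ht : 0 ≤ t) {n : ℕ} (x : Fin n → X) (v : Fin n → ℝ) :
    0 ≤ ∑ i, ∑ j, v i * v j * Real.exp (-(ψ (x i) (x j) * t)) := by
  have hsym := h.2.1
  cases n with
  | zero => simp
  | succ m =>
    have scalar : ∀ a b pij pi0 pj0 : ℝ,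
        (a * Real.exp (-(pi0*t))) * (b * Real.exp (-(pj0*t)))
            * Real.exp (t * (pi0 + pj0 - pij))
          = a * b * Real.exp (-(pij*t)) := by
      intro a b pij pi0 pj0
      rw [show t*(pi0+pj0-pij) = -(pij*t) - (-(pi0*t)) - (-(pj0*t)) by ring,
        Real.exp_sub, Real.exp_sub]
      field_simp
    set x₀ := x 0 with hx₀
    have hφpos : PosQF (fun i j : Fin (m+1) =>
        t * (ψ (x i) x₀ + ψ (x j) x₀ - ψ (x i) (x j))) := by
      intro w
      have h1 := (h.posQF_phi x x₀) w
      have h2 : ∑ i, ∑ j, w i * w j * (t * (ψ (x i) x₀ + ψ (x j) x₀ - ψ (x i) (x j)))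
          = t * ∑ i, ∑ j, w i * w j * (ψ (x i) x₀ + ψ (x j) x₀ - ψ (x i) (x j)) := by
        rw [Finset.mul_sum]
        refine Finset.sum_congr rfl fun i _ => ?_
        rw [Finset.mul_sum]
        exact Finset.sum_congr rfl fun j _ => by ring
      calc (0:ℝ) ≤ t * ∑ i, ∑ j, w i * w j * (ψ (x i) x₀ + ψ (x j) x₀ - ψ (x i) (x j)) :=
            mul_nonneg ht h1
        _ = _ := h2.symm
    have hφsym : ∀ i j : Fin (m+1),
        t * (ψ (x i) x₀ + ψ (x j) x₀ - ψ (x i) (x j))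
          = t * (ψ (x j) x₀ + ψ (x i) x₀ - ψ (x j) (x i)) := by
      intro i j
      rw [hsym (x i) (x j)]; ring
    have hexp := PosQF.exp hφpos hφsym
    have h0 := hexp (fun i => v i * Real.exp (-(ψ (x i) x₀ * t)))
    simp only [] at h0
    calc (0:ℝ) ≤ ∑ i, ∑ j, (v i * Real.exp (-(ψ (x i) x₀ * t)))
          * (v j * Real.exp (-(ψ (x j) x₀ * t)))
          * Real.exp (t * (ψ (x i) x₀ + ψ (x j) x₀ - ψ (x i) (x j))) := h0
      _ = ∑ i, ∑ j, v i * v j * Real.exp (-(ψ (x i) (x j) * t)) :=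
          Finset.sum_congr rfl fun i _ => Finset.sum_congr rfl fun j _ => scalar _ _ _ _ _

end NegType

section Integral

lemma contOn_aux (s α : ℝ) :
    ContinuousOn (fun t : ℝ => (1 - Real.exp (-(s*t))) * t ^ (-1-α)) (Ioi 0) := by
  apply ContinuousOn.mul
  · exact (continuous_const.sub ((Real.continuous_exp.comp
      ((continuous_const.mul continuous_id).neg)))).continuousOn
  · exact fun t ht => (Real.continuousAt_rpow_const t _ (Or.inl (ne_of_gt ht))).continuousWithinAt

lemma integrable_aux {α s : ℝ} (hs : 0 ≤ s) (hα : 0 < α) (hα' : α < 1) :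
    IntegrableOn (fun t : ℝ => (1 - Real.exp (-(s*t))) * t ^ (-1-α)) (Ioi 0) := by
  have hmeas : ∀ (u : Set ℝ), MeasurableSet u → u ⊆ Ioi 0 →
      AEStronglyMeasurable (fun t : ℝ => (1 - Real.exp (-(s*t))) * t ^ (-1-α))
        (volume.restrict u) := fun u hu hsub =>
    ((contOn_aux s α).mono hsub).aestronglyMeasurable hu
  have hnonneg : ∀ t : ℝ, 0 ≤ t → 0 ≤ 1 - Real.exp (-(s*t)) := by
    intro t ht
    have : Real.exp (-(s*t)) ≤ 1 := Real.exp_le_one_iff.mpr (by nlinarith)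
    linarith
  rw [show Set.Ioi (0:ℝ) = Set.Ioc 0 1 ∪ Set.Ioi 1 from (Set.Ioc_union_Ioi_eq_Ioi zero_le_one).symm]
  apply IntegrableOn.union
  · have hg : IntegrableOn (fun t : ℝ => s * t ^ (-α)) (Ioc 0 1) := by
      have := intervalIntegral.intervalIntegrable_rpow' (a := 0) (b := 1) (r := -α) (by linarith)
      rw [intervalIntegrable_iff_integrableOn_Ioc_of_le zero_le_one] at this
      exact this.const_mul s
    refine hg.integrable.mono' (hmeas _ measurableSet_Ioc Ioc_subset_Ioi_self) ?_
    filter_upwards [ae_restrict_mem measurableSet_Ioc] with t ht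
    obtain ⟨ht0, ht1⟩ := ht
    have h1 : 1 - Real.exp (-(s*t)) ≤ s * t := by
      have := Real.add_one_le_exp (-(s*t))
      linarith
    have hrp : (0:ℝ) ≤ t ^ (-1-α) := Real.rpow_nonneg ht0.le _
    rw [Real.norm_eq_abs, abs_of_nonneg (mul_nonneg (hnonneg t ht0.le) hrp)]
    calc (1 - Real.exp (-(s*t))) * t ^ (-1-α) ≤ (s * t) * t ^ (-1-α) :=
          mul_le_mul_of_nonneg_right h1 hrp
      _ = s * t ^ (-α) := by
          rw [mul_assoc]
          congr 1
          nth_rewrite 1 [← Real.rpow_one t]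
          rw [← Real.rpow_add ht0]
          congr 1; ring
  · have hg : IntegrableOn (fun t : ℝ => t ^ (-1-α)) (Ioi 1) :=
      integrableOn_Ioi_rpow_of_lt (by linarith) zero_lt_one
    refine hg.integrable.mono' (hmeas _ measurableSet_Ioi (Ioi_subset_Ioi zero_le_one)) ?_
    filter_upwards [ae_restrict_mem measurableSet_Ioi] with t ht
    have ht0 : (0:ℝ) < t := lt_trans zero_lt_one ht
    have hrp : (0:ℝ) ≤ t ^ (-1-α) := Real.rpow_nonneg ht0.le _
    rw [Real.norm_eq_abs, abs_of_nonneg (mul_nonneg (hnonneg t ht0.le) hrp)]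
    have h1 : 1 - Real.exp (-(s*t)) ≤ 1 := by
      have := Real.exp_nonneg (-(s*t)); linarith
    nlinarith [hnonneg t ht0.le]

lemma scaling_aux {α s : ℝ} (hs : 0 < s) (hα : 0 < α) :
    ∫ t in Ioi (0:ℝ), (1 - Real.exp (-(s*t))) * t ^ (-1-α)
      = s ^ α * ∫ t in Ioi (0:ℝ), (1 - Real.exp (-t)) * t ^ (-1-α) := by
  have h := integral_comp_mul_left_Ioi (fun u : ℝ => (1 - Real.exp (-u)) * u ^ (-1-α)) 0 hs
  rw [mul_zero] at h
  have h2 : ∫ t in Ioi (0:ℝ), (1 - Real.exp (-(s*t))) * (s*t) ^ (-1-α)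
      = s ^ (-1-α) * ∫ t in Ioi (0:ℝ), (1 - Real.exp (-(s*t))) * t ^ (-1-α) := by
    rw [← integral_const_mul]
    refine setIntegral_congr_fun measurableSet_Ioi fun t ht => ?_
    rw [Real.mul_rpow hs.le (le_of_lt ht)]
    ring
  simp only [smul_eq_mul] at h
  rw [h2] at h
  have hsne : s ^ (-1-α) ≠ 0 := by positivity
  have key : ∫ t in Ioi (0:ℝ), (1 - Real.exp (-(s*t))) * t ^ (-1-α)
      = (s ^ (-1-α))⁻¹ * (s⁻¹ * ∫ u in Ioi (0:ℝ), (1 - Real.exp (-u)) * u ^ (-1-α)) := by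
    rw [← h, inv_mul_cancel_left₀ hsne]
  have e1 : (s ^ (-1-α))⁻¹ = s ^ (1+α) := by
    rw [← Real.rpow_neg hs.le, show (-(-1-α) : ℝ) = 1 + α by ring]
  have e2 : s⁻¹ = s ^ (-1 : ℝ) := (Real.rpow_neg_one s).symm
  rw [key, e1, e2, ← mul_assoc, ← Real.rpow_add hs,
    show (1 + α + -1 : ℝ) = α by ring]

lemma Cpos_aux {α : ℝ} (hα : 0 < α) (hα' : α < 1) :
    0 < ∫ t in Ioi (0:ℝ), (1 - Real.exp (-t)) * t ^ (-1-α) := by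
  have hpos : ∀ t : ℝ, 0 < t → 0 < (1 - Real.exp (-t)) * t ^ (-1-α) := by
    intro t ht
    have h1 : Real.exp (-t) < 1 := Real.exp_lt_one_iff.mpr (by linarith)
    have h2 : (0:ℝ) < t ^ (-1-α) := Real.rpow_pos_of_pos ht _
    nlinarith
  have hint : IntegrableOn (fun t : ℝ => (1 - Real.exp (-t)) * t ^ (-1-α)) (Ioi 0) := by
    have h1 := integrable_aux (s := 1) zero_le_one hα hα'
    simpa using h1
  rw [setIntegral_pos_iff_support_of_nonneg_ae ?_ hint]
  · refine lt_of_lt_of_le ?_ (measure_mono (fun t ht => ⟨(hpos t ht).ne', ht⟩ :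
      Ioi (0:ℝ) ⊆ Function.support (fun t : ℝ => (1 - Real.exp (-t)) * t ^ (-1-α)) ∩ Ioi 0))
    simp [Real.volume_Ioi]
  · filter_upwards [ae_restrict_mem measurableSet_Ioi] with t ht
    exact (hpos t ht).le

lemma repr_aux {α s : ℝ} (hs : 0 ≤ s) (hα : 0 < α) :
    s ^ α * ∫ t in Ioi (0:ℝ), (1 - Real.exp (-t)) * t ^ (-1-α)
      = ∫ t in Ioi (0:ℝ), (1 - Real.exp (-(s*t))) * t ^ (-1-α) := by
  rcases eq_or_lt_of_le hs with heq | hpos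
  · rw [← heq, Real.zero_rpow hα.ne', zero_mul]
    symm
    have h0 : ∀ t : ℝ, (1 - Real.exp (-((0:ℝ)*t))) * t ^ (-1-α) = 0 := by
      intro t; simp
    simp only [h0, integral_zero]
  · exact (scaling_aux hpos hα).symm

end Integral

theorem schoenberg_main {α : ℝ} (hα₀ : 0 < α) (hα₁ : α ≤ 1) (X : Type) (ψ : X → X → ℝ)
    (h : IsNegTypeKernel ψ) : IsNegTypeKernel (fun x y => ψ x y ^ α) := by
  rcases eq_or_lt_of_le hα₁ with heq | hα₁
  · subst heq
    simpa [Real.rpow_one] using h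
  obtain ⟨hdiag, hsym, hneg⟩ := h
  have h' : IsNegTypeKernel ψ := ⟨hdiag, hsym, hneg⟩
  refine ⟨fun x => by show ψ x x ^ α = 0; rw [hdiag, Real.zero_rpow hα₀.ne'],
    fun x y => by show ψ x y ^ α = ψ y x ^ α; rw [hsym], ?_⟩
  intro n x lam hlam
  set C : ℝ := ∫ t in Ioi (0:ℝ), (1 - Real.exp (-t)) * t ^ (-1-α) with hC
  have hCpos := Cpos_aux hα₀ hα₁
  show ∑ i, ∑ j, lam i * lam j * ψ (x i) (x j) ^ α ≤ 0
  set S : ℝ := ∑ i, ∑ j, lam i * lam j * ψ (x i) (x j) ^ α with hS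
  have key : S * C = ∫ t in Ioi (0:ℝ),
      ∑ i, ∑ j, lam i * lam j * ((1 - Real.exp (-(ψ (x i) (x j) * t))) * t ^ (-1-α)) := by
    have hint : ∀ i j : Fin n, Integrable
        (fun t : ℝ => lam i * lam j * ((1 - Real.exp (-(ψ (x i) (x j) * t))) * t ^ (-1-α)))
        (volume.restrict (Ioi 0)) :=
      fun i j => (integrable_aux (h'.nonneg _ _) hα₀ hα₁).const_mul _
    rw [integral_finset_sum _ fun i _ => integrable_finset_sum _ fun j _ => hint i j]
    rw [hS, Finset.sum_mul]
    refine Finset.sum_congr rfl fun i _ => ?_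
    rw [integral_finset_sum _ fun j _ => hint i j, Finset.sum_mul]
    refine Finset.sum_congr rfl fun j _ => ?_
    rw [integral_const_mul, mul_assoc, repr_aux (h'.nonneg _ _) hα₀]
  have hle : (∫ t in Ioi (0:ℝ),
      ∑ i, ∑ j, lam i * lam j * ((1 - Real.exp (-(ψ (x i) (x j) * t))) * t ^ (-1-α))) ≤ 0 := by
    apply setIntegral_nonpos measurableSet_Ioi
    intro t ht
    have ht0 : (0:ℝ) < t := ht
    have hT : (0:ℝ) ≤ t ^ (-1-α) := Real.rpow_nonneg ht0.le _
    have split : ∀ i j : Fin n,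
        lam i * lam j * ((1 - Real.exp (-(ψ (x i) (x j) * t))) * t ^ (-1-α))
        = lam i * lam j * t ^ (-1-α)
          - lam i * lam j * Real.exp (-(ψ (x i) (x j) * t)) * t ^ (-1-α) := fun i j => by ring
    simp only [split, Finset.sum_sub_distrib]
    have hz : ∀ i : Fin n, ∑ j, lam i * lam j * t ^ (-1-α) = 0 := by
      intro i
      have e : ∑ j, lam i * lam j * t ^ (-1-α) = (lam i * t ^ (-1-α)) * ∑ j, lam j := by
        rw [Finset.mul_sum]
        exact Finset.sum_congr rfl fun j _ => by ring
      rw [e, hlam, mul_zero]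
    simp only [hz, Finset.sum_const_zero, zero_sub, neg_nonpos]
    have factor : ∑ i, ∑ j, lam i * lam j * Real.exp (-(ψ (x i) (x j) * t)) * t ^ (-1-α)
        = (∑ i, ∑ j, lam i * lam j * Real.exp (-(ψ (x i) (x j) * t))) * t ^ (-1-α) := by
      rw [Finset.sum_mul]
      exact Finset.sum_congr rfl fun i _ => by rw [Finset.sum_mul]
    rw [factor]
    exact mul_nonneg (h'.exp_posQF ht0.le x lam) hT
  have hSC : S * C ≤ 0 := by rw [key]; exact hle
  nlinarith [hSC, hCpos]

/-- Schoenberg: a positive power α ≤ 1 of a negative type kernel is of negative type;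
consequently if d^q is of negative type and 0 < p ≤ q then so is d^p. -/
theorem negType_rpow (α : ℝ) (hα₀ : 0 < α) (hα₁ : α ≤ 1) :
    (∀ (X : Type) (ψ : X → X → ℝ), IsNegTypeKernel ψ →
      IsNegTypeKernel (fun x y => ψ x y ^ α)) ∧
    (∀ (Y : Type) [MetricSpace Y] (p q : ℝ), 0 < p → p ≤ q →
      IsNegTypeKernel (fun x y : Y => dist x y ^ q) →
      IsNegTypeKernel (fun x y : Y => dist x y ^ p)) := by
  refine ⟨fun X ψ h => schoenberg_main hα₀ hα₁ X ψ h, ?_⟩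
  intro Y _ p q hp hpq hquad
  have hq : 0 < q := lt_of_lt_of_le hp hpq
  have h2 := schoenberg_main (div_pos hp hq) ((div_le_one hq).mpr hpq) Y
    (fun x y => dist x y ^ q) hquad
  have h3 : IsNegTypeKernel (fun x y : Y => (dist x y ^ q) ^ (p/q)) := h2
  have heq : (fun x y : Y => (dist x y ^ q) ^ (p/q)) = fun x y : Y => dist x y ^ p := by
    funext x y
    rw [← Real.rpow_mul dist_nonneg, mul_div_cancel₀ p hq.ne']
  rw [heq] at h3
  exact h3
end

section
/- The metric space ℤ (with the metric |m - n|) has generalized roundness exactly 2: the inequality ∑_{i<j}(|a_i-a_j|^p + |b_i-b_j|^p) ≤ ∑_{i,j}|a_i-b_j|^p holds for all configurations when p = 2, and fails for some configuration whenever p > 2. -/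
lemma gr_key (n : ℕ) (A B : Fin n → ℝ) :
    ∑ i, ∑ j, ((A i - A j)^2 + (B i - B j)^2) + 2*((∑ i, A i) - ∑ i, B i)^2
      = 2 * ∑ i, ∑ j, (A i - B j)^2 := by
  simp only [sub_sq, Finset.sum_add_distrib, Finset.sum_sub_distrib, Finset.sum_const,
    Finset.card_univ, Fintype.card_fin, nsmul_eq_mul]
  simp only [← Finset.mul_sum]
  simp only [← Finset.sum_mul, ← Finset.mul_sum]
  ring

lemma gr_pairs (n : ℕ) (f : Fin n → Fin n → ℝ) (hsym : ∀ i j, f i j = f j i)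
    (hdiag : ∀ i, f i i = 0) :
    2 * ∑ q ∈ Finset.univ.filter (fun q : Fin n × Fin n => q.1 < q.2), f q.1 q.2
      = ∑ i, ∑ j, f i j := by
  rw [← Finset.sum_product']
  rw [← Finset.sum_filter_add_sum_filter_not (Finset.univ ×ˢ Finset.univ)
    (fun q : Fin n × Fin n => q.1 < q.2)]
  have huniv : (Finset.univ ×ˢ Finset.univ : Finset (Fin n × Fin n)) = Finset.univ := by
    simp [Finset.eq_univ_iff_forall]
  rw [huniv]
  have h2 : ∑ q ∈ Finset.univ.filter (fun q : Fin n × Fin n => ¬ q.1 < q.2), f q.1 q.2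
      = ∑ q ∈ Finset.univ.filter (fun q : Fin n × Fin n => q.1 < q.2), f q.1 q.2 := by
    rw [← Finset.sum_filter_add_sum_filter_not
      (Finset.univ.filter (fun q : Fin n × Fin n => ¬ q.1 < q.2))
      (fun q : Fin n × Fin n => q.2 < q.1)]
    have hz : ∑ q ∈ (Finset.univ.filter (fun q : Fin n × Fin n => ¬ q.1 < q.2)).filter
        (fun q : Fin n × Fin n => ¬ q.2 < q.1), f q.1 q.2 = 0 := by
      apply Finset.sum_eq_zero
      intro q hq
      simp only [Finset.mem_filter, Finset.mem_univ, true_and, not_lt] at hq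
      have : q.1 = q.2 := le_antisymm hq.2 hq.1
      rw [this]; exact hdiag _
    rw [hz, add_zero]
    refine Finset.sum_nbij' (i := fun q => Prod.swap q) (j := fun q => Prod.swap q) ?_ ?_ ?_ ?_ ?_
    · intro q hq
      simp only [Finset.mem_filter, Finset.mem_univ, true_and] at hq ⊢
      exact hq.2
    · intro q hq
      simp only [Finset.mem_filter, Finset.mem_univ, true_and] at hq ⊢
      exact ⟨not_lt.mpr hq.le, hq⟩
    · intro q _; simp
    · intro q _; simp
    · intro q _; exact hsym _ _
  rw [h2]; ring

/-- ℤ with the metric |m - n| has generalized roundness exactly 2: the 2n-gon inequality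
holds for p = 2 for all configurations, and fails for some configuration when p > 2. -/
theorem int_gr_eq_two (d : ℤ → ℤ → ℝ) (hd : ∀ m n : ℤ, d m n = |(m : ℝ) - n|) :
    (∀ (n : ℕ), 2 ≤ n → ∀ a b : Fin n → ℤ,
      ∑ q ∈ Finset.univ.filter (fun q : Fin n × Fin n => q.1 < q.2),
          (d (a q.1) (a q.2) ^ (2 : ℝ) + d (b q.1) (b q.2) ^ (2 : ℝ))
        ≤ ∑ i : Fin n, ∑ j : Fin n, d (a i) (b j) ^ (2 : ℝ)) ∧
    (∀ p : ℝ, 2 < p → ∃ (n : ℕ), 2 ≤ n ∧ ∃ a b : Fin n → ℤ,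
      ¬ (∑ q ∈ Finset.univ.filter (fun q : Fin n × Fin n => q.1 < q.2),
            (d (a q.1) (a q.2) ^ p + d (b q.1) (b q.2) ^ p)
          ≤ ∑ i : Fin n, ∑ j : Fin n, d (a i) (b j) ^ p)) := by
  constructor
  · intro n _ a b
    simp only [hd, Real.rpow_two, sq_abs]
    set A : Fin n → ℝ := fun i => ((a i : ℤ) : ℝ) with hA
    set B : Fin n → ℝ := fun i => ((b i : ℤ) : ℝ) with hB
    have hp := gr_pairs n (fun i j => (A i - A j)^2 + (B i - B j)^2)
      (fun i j => by ring) (fun i => by ring)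
    have hk := gr_key n A B
    nlinarith [sq_nonneg ((∑ i, A i) - ∑ i, B i)]
  · intro p hp
    refine ⟨2, le_refl 2, ![0, 2], ![1, 1], ?_⟩
    have hfilter : (Finset.univ.filter (fun q : Fin 2 × Fin 2 => q.1 < q.2))
        = {((0 : Fin 2), (1 : Fin 2))} := by decide
    rw [hfilter, Finset.sum_singleton]
    simp only [hd, Fin.sum_univ_two, Matrix.cons_val_zero, Matrix.cons_val_one, Matrix.head_cons]
    push_cast
    norm_num
    rw [Real.zero_rpow (by intro h; rw [h] at hp; norm_num at hp)]
    have h4 : (4 : ℝ) = 2 ^ (2 : ℝ) := by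
      rw [show (2:ℝ)^(2:ℝ) = 2^(2:ℕ) by rw [← Real.rpow_natCast]; norm_num]
      norm_num
    have := Real.rpow_lt_rpow_of_exponent_lt (x := 2) (by norm_num) hp
    linarith
end
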